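/- If X is a subdomain of the unit disk Δ that is not relatively compact in Δ, then there exists a sequence f_n of holomorphic maps from Δ to X such that the iterated function system F_n = f₁ ∘ ⋯ ∘ f_n has at least two distinct accumulation points (locally uniform subsequential limits). -/

import Mathlib

open Complex Metric Filter

/-- Poincaré distance on the unit disk, normalized with density 1/(1-|z|^2). -/
noncomputable def rho (z w : ℂ) : ℝ :=
  (1 / 2) * Real.log ((1 + ‖(z - w) / (1 - (starRingEnd ℂ) w * z)‖) /
    (1 - ‖(z - w) / (1 - (starRingEnd ℂ) w * z)‖))

/-- The open unit disk Δ. -/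
def unitDisk : Set ℂ := Metric.ball (0 : ℂ) 1

/-- The hyperbolic disk of center `a` and ρ-radius `r` inside Δ. -/
def hBall (a : ℂ) (r : ℝ) : Set ℂ := {z ∈ unitDisk | rho a z < r}

/-- `X` is a ρ-Bloch subdomain of Δ: the ρ-radii of hyperbolic disks contained in `X`
are bounded. -/
def IsBloch (X : Set ℂ) : Prop :=
  ∃ R : ℝ, ∀ a ∈ unitDisk, ∀ r : ℝ, hBall a r ⊆ X → r ≤ R

/-- `f` is holomorphic on Δ with values in `X`. -/
def HolOn (f : ℂ → ℂ) (X : Set ℂ) : Prop :=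
  DifferentiableOn ℂ f unitDisk ∧ Set.MapsTo f unitDisk X

/-- The compositions `F_n = f 1 ∘ f 2 ∘ ⋯ ∘ f n` (with `F_0 = id`). -/
def comps (f : ℕ → ℂ → ℂ) : ℕ → ℂ → ℂ
  | 0 => id
  | n + 1 => comps f n ∘ f (n + 1)

/-- `X` is degenerate in Δ: every locally uniform subsequential limit of the
compositions of any sequence in Hol(Δ, X) is constant on Δ. -/
def Degenerate (X : Set ℂ) : Prop :=
  ∀ f : ℕ → ℂ → ℂ, (∀ n, 1 ≤ n → HolOn (f n) X) →
    ∀ φ : ℕ → ℕ, StrictMono φ → ∀ F : ℂ → ℂ,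
      TendstoLocallyUniformlyOn (fun k => comps f (φ k)) F atTop unitDisk →
      ∀ z ∈ unitDisk, ∀ w ∈ unitDisk, F z = F w

/-- The Poincaré distance of the hyperbolic domain `X` (as the distance pushed
forward from the disk by holomorphic maps; for domains covered by Δ this agrees
with the Poincaré metric of `X`). -/
noncomputable def rhoX (X : Set ℂ) (a b : ℂ) : ℝ :=
  sInf {r : ℝ | ∃ f : ℂ → ℂ, ∃ t ∈ unitDisk,
    HolOn f X ∧ f 0 = a ∧ f t = b ∧ r = rho 0 t}

/-!
Fix `x₀ ≠ a` in `X`. If `F = F_n` satisfies `F x₀ = p` and `F t = q` for some `t ∈ X`,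
precompose it with a holomorphic `g : Δ → X` such that `g x₀ = t`, `g t' = x₀` for some `t' ∈ X`,
and `g` is uniformly close to `t` on the disk of radius `1 - 1/(n+1)`: then `F ∘ g` is close to
`q` there, and the roles of `p` and `q` are swapped. Starting from `(p, q) = (x₀, a)`, the even
and odd compositions converge locally uniformly to the constants `x₀` and `a`.

The map `g` is `h ∘ k`. Here `h : Δ → X` passes through `t` at `0` and through `x₀` at some `β`; it
is a polynomial approximation of a path from `x₀` to `t` in `X`, composed with a map of `Δ` into
a thin neighbourhood of `[0, 1]`. The map `k` is `β (m / m t') ^ N`, with `m` the disk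
automorphism sending `x₀` to `0`. Since `X` accumulates at `∂Δ`, we can choose `t' ∈ X` with
`‖m t'‖` so close to `1` that `k` is tiny on the given disk.
-/
open Set Topology
open scoped ComplexConjugate

lemma mem_unitDisk {z : ℂ} : z ∈ unitDisk ↔ ‖z‖ < 1 := mem_ball_zero_iff

lemma HolOn.comp {f g : ℂ → ℂ} {X Y : Set ℂ} (hg : HolOn g Y) (hf : HolOn f X)
    (hX : X ⊆ unitDisk) : HolOn (g ∘ f) Y :=
  ⟨hg.1.comp hf.1 (hf.2.mono_right hX), hg.2.comp (hf.2.mono_right hX)⟩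

noncomputable def mobius (a z : ℂ) : ℂ := (a - z) / (1 - conj a * z)

lemma mobius_self (a : ℂ) : mobius a a = 0 := by simp [mobius]

lemma normSq_one_sub_conj_mul_sub_normSq_sub (a z : ℂ) :
    normSq (1 - conj a * z) - normSq (a - z) = (1 - normSq a) * (1 - normSq z) := by
  simp only [normSq_apply, sub_re, sub_im, mul_re, mul_im, one_re, one_im, conj_re, conj_im]
  ring

lemma one_sub_conj_mul_ne_zero {a z : ℂ} (ha : ‖a‖ < 1) (hz : ‖z‖ ≤ 1) :
    1 - conj a * z ≠ 0 := by
  refine sub_ne_zero.2 fun h => ?_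
  have : ‖conj a * z‖ < 1 := by
    rw [norm_mul, RCLike.norm_conj]
    nlinarith [norm_nonneg a, norm_nonneg z]
  simp [← h] at this

lemma differentiableAt_mobius {a z : ℂ} (ha : ‖a‖ < 1) (hz : ‖z‖ ≤ 1) :
    DifferentiableAt ℂ (mobius a) z :=
  ((differentiableAt_const a).sub differentiableAt_id).div
    ((differentiableAt_const 1).sub ((differentiableAt_const _).mul differentiableAt_id))
    (one_sub_conj_mul_ne_zero ha hz)

lemma norm_mobius_lt_one {a z : ℂ} (ha : ‖a‖ < 1) (hz : ‖z‖ < 1) : ‖mobius a z‖ < 1 := by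
  have hden := one_sub_conj_mul_ne_zero ha hz.le
  rw [mobius, norm_div, div_lt_one (norm_pos_iff.2 hden), ← sq_lt_sq₀ (norm_nonneg _)
    (norm_nonneg _), Complex.sq_norm, Complex.sq_norm, ← sub_pos,
    normSq_one_sub_conj_mul_sub_normSq_sub, ← Complex.sq_norm, ← Complex.sq_norm]
  apply mul_pos <;> nlinarith [norm_nonneg a, norm_nonneg z]

lemma norm_mobius_eq_one {a z : ℂ} (ha : ‖a‖ < 1) (hz : ‖z‖ = 1) : ‖mobius a z‖ = 1 := by
  have hden : 1 - conj a * z = z * conj (z - a) := by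
    rw [map_sub, mul_sub, mul_conj, normSq_eq_norm_sq, hz]
    push_cast
    ring
  have hza : z - a ≠ 0 := sub_ne_zero.2 fun h => by simp [← h, hz] at ha
  rw [mobius, hden, norm_div, norm_mul, hz, RCLike.norm_conj, norm_sub_rev, one_mul,
    div_self (norm_ne_zero_iff.2 hza)]

lemma exists_mem_lt_norm_mobius {X : Set ℂ} (hXs : X ⊆ unitDisk)
    (hnc : ¬ closure X ⊆ unitDisk) {a : ℂ} (ha : a ∈ unitDisk) {ρ : ℝ} (hρ : ρ < 1) :
    ∃ t ∈ X, ρ < ‖mobius a t‖ := by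
  rw [mem_unitDisk] at ha
  obtain ⟨w, hwX, hw⟩ := not_subset.1 hnc
  have hw1 : ‖w‖ = 1 := by
    have := closure_mono hXs hwX
    rw [unitDisk, closure_ball _ one_ne_zero, mem_closedBall_zero_iff] at this
    exact le_antisymm this (not_lt.1 (mt mem_unitDisk.2 hw))
  have hnear : ∀ᶠ t in 𝓝 w, ρ < ‖mobius a t‖ :=
    (differentiableAt_mobius ha hw1.le).continuousAt.norm.eventually
      (lt_mem_nhds (show ρ < ‖mobius a w‖ by rwa [norm_mobius_eq_one ha hw1]))
  obtain ⟨t, ht, htX⟩ := mem_closure_iff_nhds.1 hwX _ hnear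
  exact ⟨t, htX, ht⟩

lemma exists_lt_one_forall_norm_mobius_le {a : ℂ} (ha : ‖a‖ < 1) {r : ℝ} (hr : r < 1) :
    ∃ ρ, 0 ≤ ρ ∧ ρ < 1 ∧ ∀ z, ‖z‖ ≤ r → ‖mobius a z‖ ≤ ρ := by
  have hcont : ContinuousOn (fun z => -‖mobius a z‖) (closedBall 0 r) := fun z hz =>
    (differentiableAt_mobius ha ((mem_closedBall_zero_iff.1 hz).trans hr.le)).continuousAt
      |>.norm.neg.continuousWithinAt
  obtain ⟨ρ, hρ, hle⟩ := (isCompact_closedBall (0 : ℂ) r).exists_forall_le' hcont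
    fun z hz => neg_lt_neg (norm_mobius_lt_one ha ((mem_closedBall_zero_iff.1 hz).trans_lt hr))
  exact ⟨max (-ρ) 0, le_max_right _ _, max_lt (by linarith) one_pos,
    fun z hz => (le_neg.1 (hle z (mem_closedBall_zero_iff.2 hz))).trans (le_max_left _ _)⟩

lemma norm_mul_div_pow_le {α β w : ℂ} {N : ℕ} (hα : α ≠ 0) (hβα : ‖β‖ ≤ ‖α‖ ^ N) :
    ‖β * (w / α) ^ N‖ ≤ ‖w‖ ^ N := by
  rw [norm_mul, norm_pow, norm_div, div_pow, mul_div_left_comm]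
  exact mul_le_of_le_one_right (by positivity)
    ((div_le_one (pow_pos (norm_pos_iff.2 hα) N)).2 hβα)

/-- The witness is `k = β (mobius x₀ · / mobius x₀ t) ^ N` with `N` large and `t ∈ X` close
enough to `∂Δ`. -/
lemma exists_holOn_unitDisk_small {X : Set ℂ} (hXs : X ⊆ unitDisk)
    (hnc : ¬ closure X ⊆ unitDisk) {x₀ β : ℂ} (hx₀ : x₀ ∈ unitDisk) (hβ : β ∈ unitDisk)
    {r τ : ℝ} (hr : r < 1) (hτ : 0 < τ) :
    ∃ k, HolOn k unitDisk ∧ k x₀ = 0 ∧ (∃ t ∈ X, k t = β) ∧ ∀ z, ‖z‖ ≤ r → ‖k z‖ < τ := by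
  rw [mem_unitDisk] at hx₀ hβ
  obtain ⟨ρ₀, hρ₀, hρ₀1, hle⟩ := exists_lt_one_forall_norm_mobius_le hx₀ hr
  have hρ₁ : ρ₀ < (1 + ρ₀) / 2 := by linarith
  have hratio : ρ₀ / ((1 + ρ₀) / 2) < 1 := (div_lt_one (by linarith)).2 hρ₁
  obtain ⟨N, hN0, hN⟩ : ∃ N ≠ 0, (ρ₀ / ((1 + ρ₀) / 2)) ^ N < τ := by
    obtain ⟨N, hN⟩ := exists_pow_lt_of_lt_one hτ hratio
    exact ⟨N + 1, N.succ_ne_zero,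
      (pow_le_pow_of_le_one (by positivity) hratio.le N.le_succ).trans_lt hN⟩
  obtain ⟨t, htX, ht⟩ := exists_mem_lt_norm_mobius hXs hnc (mem_unitDisk.2 hx₀)
    (max_lt (show (1 + ρ₀) / 2 < 1 by linarith)
      (Real.rpow_lt_one (norm_nonneg β) hβ (inv_pos.2 (Nat.cast_pos.2 (Nat.pos_of_ne_zero hN0)))))
  set α := mobius x₀ t
  have hα : (1 + ρ₀) / 2 < ‖α‖ := (le_max_left _ _).trans_lt ht
  have hα₀ : α ≠ 0 := norm_pos_iff.1 (by linarith)
  have hβα : ‖β‖ ≤ ‖α‖ ^ N := by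
    rw [← Real.rpow_inv_natCast_pow (norm_nonneg β) hN0]
    exact pow_le_pow_left₀ (by positivity) ((le_max_right _ _).trans ht.le) _
  refine ⟨fun z => β * (mobius x₀ z / α) ^ N, ⟨fun z hz => ?_, fun z hz => ?_⟩, ?_,
    ⟨t, htX, ?_⟩, fun z hz => ?_⟩
  · exact (((differentiableAt_mobius hx₀ (mem_unitDisk.1 hz).le).div_const α).pow _
      |>.const_mul β).differentiableWithinAt
  · exact mem_unitDisk.2 <| (norm_mul_div_pow_le hα₀ hβα).trans_lt
      (pow_lt_one₀ (norm_nonneg _) (norm_mobius_lt_one hx₀ (mem_unitDisk.1 hz)) hN0)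
  · simp [mobius_self, hN0]
  · change β * (α / α) ^ N = β
    rw [div_self hα₀, one_pow, mul_one]
  · calc ‖β * (mobius x₀ z / α) ^ N‖
        ≤ ‖β‖ * (ρ₀ / ((1 + ρ₀) / 2)) ^ N := by
          rw [norm_mul, norm_pow, norm_div]
          gcongr
          exact hle z hz
      _ ≤ (ρ₀ / ((1 + ρ₀) / 2)) ^ N := mul_le_of_le_one_left (by positivity) hβ.le
      _ < τ := hN

lemma norm_cos_sub_cos_re_le (ζ : ℂ) : ‖cos ζ - cos ζ.re‖ ≤ Real.exp |ζ.im| - 1 := by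
  have hsplit : cos ζ - cos ζ.re
      = (Real.cos ζ.re * (Real.cosh ζ.im - 1) : ℝ) - (Real.sin ζ.re * Real.sinh ζ.im : ℝ) * I := by
    rw [cos_eq ζ]
    push_cast
    ring
  calc ‖cos ζ - cos ζ.re‖
      ≤ |Real.cos ζ.re| * |Real.cosh ζ.im - 1| + |Real.sin ζ.re| * |Real.sinh ζ.im| := by
        rw [hsplit, ← abs_mul, ← abs_mul]
        refine (norm_sub_le _ _).trans_eq ?_
        rw [norm_mul _ I, norm_I, mul_one, norm_real, norm_real, Real.norm_eq_abs,
          Real.norm_eq_abs]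
    _ ≤ 1 * (Real.cosh ζ.im - 1) + 1 * |Real.sinh ζ.im| := by
        rw [abs_of_nonneg (sub_nonneg.2 (Real.one_le_cosh _))]
        gcongr
        · linarith [Real.one_le_cosh ζ.im]
        · exact Real.abs_cos_le_one _
        · exact Real.abs_sin_le_one _
    _ = Real.exp |ζ.im| - 1 := by
        rw [Real.abs_sinh, ← Real.cosh_abs ζ.im, ← Real.cosh_add_sinh]
        ring

lemma re_one_add_div_one_sub_pos {z : ℂ} (hz : ‖z‖ < 1) : 0 < ((1 + z) / (1 - z)).re := by
  have hz1 : 1 - z ≠ 0 := sub_ne_zero.2 fun h => by simp [← h] at hz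
  have hnum : (1 + z).re * (1 - z).re + (1 + z).im * (1 - z).im = 1 - normSq z := by
    simp only [normSq_apply, add_re, sub_re, add_im, sub_im, one_re, one_im]
    ring
  rw [div_re, ← add_div, hnum, ← Complex.sq_norm]
  exact div_pos (by nlinarith [norm_nonneg z]) (normSq_pos.2 hz1)

lemma differentiableAt_log_one_add_div_one_sub {z : ℂ} (hz : ‖z‖ < 1) :
    DifferentiableAt ℂ (fun z => log ((1 + z) / (1 - z))) z :=
  (((differentiableAt_const 1).add differentiableAt_id).div
    ((differentiableAt_const 1).sub differentiableAt_id)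
    (sub_ne_zero.2 fun h => by simp [← h] at hz)).clog
    (Or.inl (re_one_add_div_one_sub_pos hz))

lemma abs_im_log_one_add_div_one_sub_lt {z : ℂ} (hz : ‖z‖ < 1) :
    |(log ((1 + z) / (1 - z))).im| < Real.pi / 2 := by
  rw [log_im]
  exact abs_arg_lt_pi_div_two_iff.2 (Or.inl (re_one_add_div_one_sub_pos hz))

lemma exists_log_one_add_div_one_sub_eq (y : ℝ) :
    ∃ s ∈ unitDisk, log ((1 + s) / (1 - s)) = y := by
  set E := Real.exp y
  have hE : 0 < E := Real.exp_pos y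
  refine ⟨((E - 1) / (E + 1) : ℝ), ?_, ?_⟩
  · rw [mem_unitDisk, norm_real, Real.norm_eq_abs, abs_div, abs_of_pos (by linarith : 0 < E + 1),
      div_lt_one (by linarith), abs_lt]
    constructor <;> linarith
  · have hE' : (1 + (E - 1) / (E + 1)) / (1 - (E - 1) / (E + 1)) = E := by
      field_simp
      ring
    rw [← ofReal_one, ← ofReal_add, ← ofReal_sub, ← ofReal_div, hE', ← ofReal_log hE.le,
      Real.log_exp]

/-- `z ↦ (1 + z) / (1 - z)` maps the disk onto the right half-plane, a suitable multiple of
its logarithm onto a thin horizontal strip, and `cos` maps that strip close to `[-1, 1]`. -/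
lemma exists_holOn_thickening_unitInterval {κ : ℝ} (hκ : 0 < κ) :
    ∃ h, HolOn h (thickening κ (ofReal '' Icc 0 1)) ∧ h 0 = 1 ∧ ∃ s ∈ unitDisk, h s = 0 := by
  set c := Real.log (1 + κ) / (Real.pi / 2)
  have hc : 0 < c := div_pos (Real.log_pos (by linarith)) (by positivity)
  obtain ⟨s, hs, hs'⟩ := exists_log_one_add_div_one_sub_eq (Real.pi / c)
  refine ⟨fun z => (1 + cos (c * log ((1 + z) / (1 - z)))) / 2, ⟨fun z hz => ?_, fun z hz => ?_⟩,
    by simp, s, hs, ?_⟩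
  · exact ((((differentiableAt_log_one_add_div_one_sub (mem_unitDisk.1 hz)).const_mul _).ccos
      |>.const_add 1).div_const 2).differentiableWithinAt
  · set ζ := c * log ((1 + z) / (1 - z))
    have hexp : Real.exp |ζ.im| < 1 + κ := by
      have him : ζ.im = c * (log ((1 + z) / (1 - z))).im := by simp [ζ]
      calc Real.exp |ζ.im| < Real.exp (c * (Real.pi / 2)) := by
            rw [Real.exp_lt_exp, him, abs_mul, abs_of_pos hc]
            gcongr
            exact abs_im_log_one_add_div_one_sub_lt (mem_unitDisk.1 hz)
        _ = 1 + κ := by rw [div_mul_cancel₀ _ (by positivity), Real.exp_log (by linarith)]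
    refine mem_thickening_iff.2 ⟨((1 + Real.cos ζ.re) / 2 : ℝ), ⟨_, ⟨?_, ?_⟩, rfl⟩, ?_⟩
    · linarith [Real.neg_one_le_cos ζ.re]
    · linarith [Real.cos_le_one ζ.re]
    · rw [dist_eq_norm]
      calc ‖(1 + cos ζ) / 2 - ((1 + Real.cos ζ.re) / 2 : ℝ)‖ = ‖cos ζ - cos ζ.re‖ / 2 := by
            push_cast
            rw [show (1 + cos ζ) / 2 - (1 + cos ζ.re) / 2 = (cos ζ - cos ζ.re) / 2 by ring,
              norm_div, RCLike.norm_ofNat]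
        _ < κ := by linarith [norm_cos_sub_cos_re_le ζ]
  · beta_reduce
    rw [hs', ← ofReal_mul, mul_div_cancel₀ _ hc.ne', ← ofReal_cos, Real.cos_pi]
    norm_num

lemma exists_differentiable_near_of_continuousOn {f : ℝ → ℂ} {a b : ℝ}
    (hf : ContinuousOn f (Icc a b)) {δ : ℝ} (hδ : 0 < δ) :
    ∃ P : ℂ → ℂ, Differentiable ℂ P ∧ ∀ x ∈ Icc a b, ‖P x - f x‖ < δ := by
  obtain ⟨p, hp⟩ := exists_polynomial_near_of_continuousOn a b _
    (continuous_re.comp_continuousOn hf) (δ / 2) (half_pos hδ)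
  obtain ⟨q, hq⟩ := exists_polynomial_near_of_continuousOn a b _
    (continuous_im.comp_continuousOn hf) (δ / 2) (half_pos hδ)
  refine ⟨fun z => Polynomial.aeval z p + Polynomial.aeval z q * I,
    p.differentiable_aeval.add (q.differentiable_aeval.mul_const I), fun x hx => ?_⟩
  have hsplit : Polynomial.aeval (x : ℂ) p + Polynomial.aeval (x : ℂ) q * I - f x
      = (p.eval x - (f x).re : ℝ) + (q.eval x - (f x).im : ℝ) * I := by
    have hreal (r : Polynomial ℝ) : Polynomial.aeval (x : ℂ) r = ((r.eval x : ℝ) : ℂ) :=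
      (Polynomial.ofReal_eval r x).symm
    rw [hreal, hreal]
    push_cast
    linear_combination re_add_im (f x)
  rw [hsplit]
  calc _ ≤ |p.eval x - (f x).re| + |q.eval x - (f x).im| := by
        refine (norm_add_le _ _).trans_eq ?_
        rw [norm_mul _ I, norm_I, mul_one, norm_real, norm_real, Real.norm_eq_abs,
          Real.norm_eq_abs]
    _ < δ / 2 + δ / 2 := add_lt_add (hp x hx) (hq x hx)
    _ = δ := add_halves δ

/-- Adding the affine function through the two endpoint errors makes the approximation exact
at `0` and `1` while at most tripling the error. -/
lemma exists_differentiable_near_of_continuousOn_eq {f : ℝ → ℂ}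
    (hf : ContinuousOn f (Icc 0 1)) {δ : ℝ} (hδ : 0 < δ) :
    ∃ P : ℂ → ℂ, Differentiable ℂ P ∧ P 0 = f 0 ∧ P 1 = f 1 ∧
      ∀ x ∈ Icc (0 : ℝ) 1, ‖P x - f x‖ < δ := by
  obtain ⟨P, hP, hnear⟩ := exists_differentiable_near_of_continuousOn hf (by positivity : 0 < δ / 3)
  have h0 := hnear 0 (by simp)
  have h1 := hnear 1 (by simp)
  push_cast at h0 h1
  rw [norm_sub_rev] at h0 h1
  refine ⟨fun z => P z + (f 0 - P 0) * (1 - z) + (f 1 - P 1) * z, by fun_prop, by simp,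
    by simp, fun x ⟨hx0, hx1⟩ => ?_⟩
  have hx : ‖(x : ℂ)‖ ≤ 1 := by rw [norm_real, Real.norm_eq_abs, abs_le]; constructor <;> linarith
  have hx' : ‖1 - (x : ℂ)‖ ≤ 1 := by
    rw [← ofReal_one, ← ofReal_sub, norm_real, Real.norm_eq_abs, abs_le]
    constructor <;> linarith
  calc ‖P x + (f 0 - P 0) * (1 - x) + (f 1 - P 1) * x - f x‖
      ≤ ‖P x - f x‖ + ‖f 0 - P 0‖ * ‖1 - (x : ℂ)‖ + ‖f 1 - P 1‖ * ‖(x : ℂ)‖ := by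
        rw [← norm_mul, ← norm_mul]
        refine (norm_add₃_le ..).trans_eq' ?_
        ring_nf
    _ < δ / 3 + δ / 3 + δ / 3 := by
        have e0 := mul_le_of_le_one_right (norm_nonneg (f 0 - P 0)) hx'
        have e1 := mul_le_of_le_one_right (norm_nonneg (f 1 - P 1)) hx
        linarith [hnear x ⟨hx0, hx1⟩]
    _ = δ := by ring

lemma exists_holOn_through {X : Set ℂ} (hXo : IsOpen X) (hXc : IsConnected X) {u w : ℂ}
    (hu : u ∈ X) (hw : w ∈ X) : ∃ g, HolOn g X ∧ g 0 = u ∧ ∃ β ∈ unitDisk, g β = w := by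
  have hjoin := (hXo.isConnected_iff_isPathConnected.1 hXc).joinedIn w hw u hu
  set γ := hjoin.somePath
  have hγX : range γ ⊆ X := range_subset_iff.2 hjoin.somePath_mem
  obtain ⟨δ, hδ, hδX⟩ := (isCompact_range γ.continuous).exists_thickening_subset_open hXo hγX
  obtain ⟨P, hP, hP0, hP1, hPnear⟩ :=
    exists_differentiable_near_of_continuousOn_eq γ.continuous_extend.continuousOn hδ
  have hsegX : ofReal '' Icc 0 1 ⊆ P ⁻¹' X := by
    rintro _ ⟨x, hx, rfl⟩
    refine hδX (mem_thickening_iff.2 ⟨γ.extend x, γ.extend_range ▸ mem_range_self x, ?_⟩)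
    rw [dist_eq_norm]
    exact hPnear x hx
  obtain ⟨κ, hκ, hκX⟩ := (isCompact_Icc.image continuous_ofReal).exists_thickening_subset_open
    (hXo.preimage hP.continuous) hsegX
  obtain ⟨h, hh, hh0, s, hs, hhs⟩ := exists_holOn_thickening_unitInterval hκ
  refine ⟨P ∘ h, ⟨hP.comp_differentiableOn hh.1, fun z hz => hκX (hh.2 hz)⟩, ?_, s, hs, ?_⟩
  · simp [hh0, hP1]
  · simp [hhs, hP0]

lemma exists_holOn_near_const {X : Set ℂ} (hXo : IsOpen X) (hXc : IsConnected X)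
    (hXs : X ⊆ unitDisk) (hnc : ¬ closure X ⊆ unitDisk) {x₀ u w : ℂ} (hx₀ : x₀ ∈ X)
    (hu : u ∈ X) (hw : w ∈ X) {η r : ℝ} (hη : 0 < η) (hr : r < 1) :
    ∃ f, HolOn f X ∧ f x₀ = u ∧ (∃ t ∈ X, f t = w) ∧ ∀ z, ‖z‖ ≤ r → dist (f z) u < η := by
  obtain ⟨g, hg, hg0, β, hβ, hgβ⟩ := exists_holOn_through hXo hXc hu hw
  obtain ⟨τ, hτ, hgτ⟩ := Metric.continuousWithinAt_iff.1
    (hg.1.continuousOn 0 (mem_unitDisk.2 (by simp))) η hη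
  obtain ⟨k, hk, hk0, ⟨t, htX, hkt⟩, hksmall⟩ :=
    exists_holOn_unitDisk_small hXs hnc (hXs hx₀) hβ hr hτ
  refine ⟨g ∘ k, hg.comp hk subset_rfl, by simp [hk0, hg0], ⟨t, htX, by simp [hkt, hgβ]⟩,
    fun z hz => hg0 ▸ hgτ (hk.2 (mem_unitDisk.2 (hz.trans_lt hr))) ?_⟩
  rw [dist_zero_right]
  exact hksmall z hz

/-- After `n` steps the composition `F = F_n` is a stage with `ε = 1 / (n + 1)`, where `p` is
`x₀` or `a` according to the parity of `n` and `q` is the other one. -/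
def IsStage (X : Set ℂ) (x₀ : ℂ) (ε : ℝ) (F : ℂ → ℂ) (p q : ℂ) : Prop :=
  ContinuousOn F unitDisk ∧ F x₀ = p ∧ (∃ t ∈ X, F t = q) ∧
    ∀ z, ‖z‖ ≤ 1 - ε → dist (F z) p ≤ ε

lemma isStage_id {X : Set ℂ} {x₀ a : ℂ} (hx₀ : x₀ ∈ unitDisk) (ha : a ∈ X) :
    IsStage X x₀ 1 id x₀ a := by
  refine ⟨continuousOn_id, rfl, ⟨a, ha, rfl⟩, fun z hz => ?_⟩
  rw [sub_self, norm_le_zero_iff] at hz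
  simpa [hz] using (mem_unitDisk.1 hx₀).le

lemma exists_holOn_isStage_comp {X : Set ℂ} (hXo : IsOpen X) (hXc : IsConnected X)
    (hXs : X ⊆ unitDisk) (hnc : ¬ closure X ⊆ unitDisk) {x₀ : ℂ} (hx₀ : x₀ ∈ X)
    {F : ℂ → ℂ} {p q t : ℂ} (hF : ContinuousOn F unitDisk) (hFx₀ : F x₀ = p) (ht : t ∈ X)
    (hFt : F t = q) {ε : ℝ} (hε : 0 < ε) :
    ∃ g, HolOn g X ∧ IsStage X x₀ ε (F ∘ g) q p := by
  obtain ⟨η, hη, hFη⟩ := Metric.continuousWithinAt_iff.1 (hF t (hXs ht)) ε hε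
  obtain ⟨g, hg, hgx₀, ⟨t', ht'X, hgt'⟩, hgnear⟩ :=
    exists_holOn_near_const hXo hXc hXs hnc hx₀ ht hx₀ hη (sub_lt_self 1 hε)
  refine ⟨g, hg, hF.comp hg.1.continuousOn (hg.2.mono_right hXs), by simp [hgx₀, hFt],
    ⟨t', ht'X, by simp [hgt', hFx₀]⟩, fun z hz => ?_⟩
  have hz' : z ∈ unitDisk := mem_unitDisk.2 (hz.trans_lt (sub_lt_self 1 hε))
  exact hFt ▸ (hFη (hXs (hg.2 hz')) (hgnear z hz)).le

lemma exists_forall_comps {P : ℕ → (ℂ → ℂ) → Prop} {Q : (ℂ → ℂ) → Prop} (h0 : P 0 id)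
    (hstep : ∀ n F, P n F → ∃ g, Q g ∧ P (n + 1) (F ∘ g)) :
    ∃ f : ℕ → ℂ → ℂ, (∀ n, 1 ≤ n → Q (f n)) ∧ ∀ n, P n (comps f n) := by
  choose! g hgQ hgP using hstep
  let S : ℕ → ℂ → ℂ := fun n => Nat.rec id (fun n F => F ∘ g n F) n
  have hS : ∀ n, P n (S n) := fun n => by
    induction n with
    | zero => exact h0
    | succ n ih => exact hgP n _ ih
  refine ⟨fun n => g (n - 1) (S (n - 1)), fun n _ => hgQ _ _ (hS _), fun n => ?_⟩
  suffices comps (fun n => g (n - 1) (S (n - 1))) n = S n from this ▸ hS n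
  induction n with
  | zero => rfl
  | succ n ih => exact congrArg (· ∘ g n (S n)) ih

lemma tendstoLocallyUniformlyOn_unitDisk_const {ι : Type*} {l : Filter ι} {G : ι → ℂ → ℂ}
    {c : ℂ} {ε : ι → ℝ} (hε : Tendsto ε l (𝓝 0))
    (hG : ∀ i z, ‖z‖ ≤ 1 - ε i → dist (G i z) c ≤ ε i) :
    TendstoLocallyUniformlyOn G (fun _ => c) l unitDisk := by
  rw [Metric.tendstoLocallyUniformlyOn_iff]
  intro δ hδ x hx
  rw [mem_unitDisk] at hx
  refine ⟨ball 0 ((1 + ‖x‖) / 2), mem_nhdsWithin_of_mem_nhds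
    (isOpen_ball.mem_nhds (mem_ball_zero_iff.2 (by linarith))), ?_⟩
  filter_upwards [hε.eventually (gt_mem_nhds (lt_min hδ (by linarith : 0 < (1 - ‖x‖) / 2)))]
    with i hi y hy
  rw [mem_ball_zero_iff] at hy
  rw [dist_comm]
  exact (hG i y (by linarith [min_le_right δ ((1 - ‖x‖) / 2)])).trans_lt
    (hi.trans_le (min_le_left _ _))

/-- If `X ⊆ Δ` is a subdomain that is not relatively compact in Δ, then there is a
sequence of holomorphic maps Δ → X whose iterated function system has at least two
distinct locally uniform subsequential limits. -/
theorem stmt9 (X : Set ℂ) (hXo : IsOpen X) (hXc : IsConnected X) (hXs : X ⊆ unitDisk)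
    (hnc : ¬ closure X ⊆ unitDisk) :
    ∃ f : ℕ → ℂ → ℂ, (∀ n, 1 ≤ n → HolOn (f n) X) ∧
      ∃ φ ψ : ℕ → ℕ, StrictMono φ ∧ StrictMono ψ ∧
        ∃ F G : ℂ → ℂ,
          TendstoLocallyUniformlyOn (fun k => comps f (φ k)) F atTop unitDisk ∧
          TendstoLocallyUniformlyOn (fun k => comps f (ψ k)) G atTop unitDisk ∧
          ∃ z ∈ unitDisk, F z ≠ G z := by
  obtain ⟨x₀, hx₀⟩ := hXc.nonempty
  obtain ⟨a, hax₀, ha⟩ := Filter.nonempty_of_mem (inter_mem_nhdsWithin {x₀}ᶜ (hXo.mem_nhds hx₀))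
  let v : ℕ → ℂ := fun n => if Even n then x₀ else a
  obtain ⟨f, hf, hstage⟩ := exists_forall_comps
    (P := fun n F => IsStage X x₀ (1 / (n + 1)) F (v n) (v (n + 1))) (Q := (HolOn · X))
    (by simpa [v] using isStage_id (hXs hx₀) ha)
    fun n F ⟨hF, hFx₀, ⟨t, ht, hFt⟩, _⟩ => by
      simpa [v, Nat.even_add_one, Nat.cast_add_one] using
        exists_holOn_isStage_comp hXo hXc hXs hnc hx₀ hF hFx₀ ht hFt
          (Nat.one_div_pos_of_nat (n := n + 1))
  have hlim (φ : ℕ → ℕ) (c : ℂ) (hφ : StrictMono φ) (hc : ∀ k, v (φ k) = c) :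
      TendstoLocallyUniformlyOn (fun k => comps f (φ k)) (fun _ => c) atTop unitDisk :=
    tendstoLocallyUniformlyOn_unitDisk_const
      (tendsto_one_div_add_atTop_nhds_zero_nat.comp hφ.tendsto_atTop)
      fun k => hc k ▸ (hstage (φ k)).2.2.2
  have heven : StrictMono (2 * ·) := fun _ _ h => by beta_reduce; omega
  have hodd : StrictMono (2 * · + 1) := fun _ _ h => by beta_reduce; omega
  refine ⟨f, hf, _, _, heven, hodd, _, _, hlim _ x₀ heven (by simp [v]),
    hlim _ a hodd (by simp [v]),
    0, mem_unitDisk.2 (by simp), fun h => hax₀ h.symm⟩
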